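/- arXiv:1203.6025 — 7 statements merged into one kernel-verified Lean document; each statement's English description precedes it below -/
import Mathlib

section
/- Let D₃ ⊆ ℝ^{n₁} × ℝ^{n₂} × ℝ^{n₃} be a nonempty compact set and g : ℝ^{n₁} × ℝ^{n₂} × ℝ^{n₃} → ℝ be continuous. For u₃ in the projection π₃(D₃) = {u₃ | ∃ u₁ u₂, (u₁,u₂,u₃) ∈ D₃}, let h(u₃) := sSup { sInf { g(u₁,u₂,u₃) | (u₁,u₂,u₃) ∈ D₃ } | u₂ with ∃ u₁, (u₁,u₂,u₃) ∈ D₃ }, and let c₃ := sInf { h(u₃) | u₃ ∈ π₃(D₃) }. Assume the infimum c₃ is attained, i.e., h(u₃*) = c₃ for some u₃* ∈ π₃(D₃). Then for every real z: [∃ u₃, (∃ u₁ u₂, (u₁,u₂,u₃) ∈ D₃) ∧ ∀ u₂, ((∃ u₁, (u₁,u₂,u₃) ∈ D₃) → ∃ u₁, ((u₁,u₂,u₃) ∈ D₃ ∧ g(u₁,u₂,u₃) ≤ z))] if and only if z ≥ c₃. -/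
/-!
The innermost minimum and the middle supremum are both taken over sections of the compact set
`D₃`, on which `g` attains its bounds; so every inner minimum is attained and all the values
involved lie in the compact set `g '' D₃`. If some `u₃` lets every admissible `u₂` be answered by
a `u₁` with `g ≤ z`, then the value at `u₃` is at most `z`, hence `c₃ ≤ z`. Conversely, at a `u₃`
attaining `c₃`, the minimiser over `u₁` answers every `u₂` with `g ≤ c₃ ≤ z`.
-/

variable {X Y Z R : Type*} [TopologicalSpace X] [TopologicalSpace Y] [TopologicalSpace Z]
  [ConditionallyCompleteLinearOrder R] [TopologicalSpace R] [OrderTopology R]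

theorem IsCompact.slice [T1Space Y] {K : Set (X × Y)} (hK : IsCompact K) (y : Y) :
    IsCompact {x | (x, y) ∈ K} :=
  (isInducing_prodMkLeft y).isCompact_preimage (isClosedMap_prodMk_right y).isClosed_range hK

section MinOver

variable [T1Space Y] {K : Set (X × Y)} {f : X × Y → R}

def minOver (K : Set (X × Y)) (f : X × Y → R) (y : Y) : R :=
  sInf {s | ∃ x, (x, y) ∈ K ∧ f (x, y) = s}

theorem isLeast_minOver (hK : IsCompact K) (hf : Continuous f) {y : Y}
    (hy : ∃ x, (x, y) ∈ K) : IsLeast {s | ∃ x, (x, y) ∈ K ∧ f (x, y) = s} (minOver K f y) := by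
  obtain ⟨x, hx⟩ := hy
  have hcompact : IsCompact ((fun x ↦ f (x, y)) '' {x | (x, y) ∈ K}) :=
    (hK.slice y).image (by fun_prop)
  obtain ⟨a, ha⟩ := hcompact.exists_isLeast ⟨f (x, y), x, hx, rfl⟩
  change IsLeast _ (sInf ((fun x ↦ f (x, y)) '' {x | (x, y) ∈ K}))
  rwa [ha.csInf_eq]

theorem minOver_le (hK : IsCompact K) (hf : Continuous f) {x : X} {y : Y} (hx : (x, y) ∈ K) :
    minOver K f y ≤ f (x, y) :=
  (isLeast_minOver hK hf ⟨x, hx⟩).2 ⟨x, hx, rfl⟩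

theorem minOver_mem_image (hK : IsCompact K) (hf : Continuous f) {y : Y}
    (hy : ∃ x, (x, y) ∈ K) : minOver K f y ∈ f '' K := by
  obtain ⟨x, hx, hfx⟩ := (isLeast_minOver hK hf hy).1
  exact ⟨(x, y), hx, hfx⟩

end MinOver

section MaxMinOver

variable [T1Space Y] [T1Space Z] {D : Set (X × Y × Z)} {g : X × Y × Z → R}

def maxMinOver (D : Set (X × Y × Z)) (g : X × Y × Z → R) (z : Z) : R :=
  sSup {r | ∃ y, (∃ x, (x, y, z) ∈ D) ∧ minOver D g (y, z) = r}

theorem minOver_le_maxMinOver (hD : IsCompact D) (hg : Continuous g) {x : X} {y : Y} {z : Z}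
    (hx : (x, y, z) ∈ D) : minOver D g (y, z) ≤ maxMinOver D g z := by
  have : Nonempty R := ⟨g (x, y, z)⟩
  have hsub : {r | ∃ y, (∃ x, (x, y, z) ∈ D) ∧ minOver D g (y, z) = r} ⊆ g '' D := by
    rintro _ ⟨y', hy', rfl⟩
    exact minOver_mem_image hD hg hy'
  exact le_csSup ((hD.image hg).bddAbove.mono hsub) ⟨y, ⟨x, hx⟩, rfl⟩

theorem maxMinOver_le (hD : IsCompact D) (hg : Continuous g) {z : Z} {c : R}
    (hz : ∃ x y, (x, y, z) ∈ D)
    (hc : ∀ y, (∃ x, (x, y, z) ∈ D) → ∃ x, (x, y, z) ∈ D ∧ g (x, y, z) ≤ c) :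
    maxMinOver D g z ≤ c := by
  obtain ⟨x, y, hxyz⟩ := hz
  refine csSup_le ⟨_, y, ⟨x, hxyz⟩, rfl⟩ ?_
  rintro _ ⟨y', hy', rfl⟩
  obtain ⟨x', hx', hle⟩ := hc y' hy'
  exact (minOver_le hD hg hx').trans hle

theorem bddBelow_maxMinOver_image (hD : IsCompact D) (hg : Continuous g) :
    BddBelow (maxMinOver D g '' {z | ∃ x y, (x, y, z) ∈ D}) := by
  rcases D.eq_empty_or_nonempty with rfl | ⟨p, -⟩
  · simp
  have : Nonempty R := ⟨g p⟩
  obtain ⟨b, hb⟩ := (hD.image hg).bddBelow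
  refine ⟨b, ?_⟩
  rintro _ ⟨z, ⟨x, y, hxyz⟩, rfl⟩
  exact (hb (minOver_mem_image hD hg ⟨x, hxyz⟩)).trans (minOver_le_maxMinOver hD hg hxyz)

end MaxMinOver

theorem stmt_2_general (n₁ n₂ n₃ : ℕ)
    (D₃ : Set ((Fin n₁ → ℝ) × (Fin n₂ → ℝ) × (Fin n₃ → ℝ)))
    (hcomp : IsCompact D₃)
    (g : ((Fin n₁ → ℝ) × (Fin n₂ → ℝ) × (Fin n₃ → ℝ)) → ℝ) (hg : Continuous g)
    (h : (Fin n₃ → ℝ) → ℝ)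
    (hh : ∀ u₃, h u₃ = sSup {r : ℝ | ∃ u₂, (∃ u₁, (u₁, u₂, u₃) ∈ D₃) ∧
      sInf {s : ℝ | ∃ u₁, (u₁, u₂, u₃) ∈ D₃ ∧ g (u₁, u₂, u₃) = s} = r})
    (c₃ : ℝ)
    (hc₃ : c₃ = sInf {r : ℝ | ∃ u₃, (∃ u₁ u₂, (u₁, u₂, u₃) ∈ D₃) ∧ h u₃ = r})
    (hattained : ∃ u₃, (∃ u₁ u₂, (u₁, u₂, u₃) ∈ D₃) ∧ h u₃ = c₃) :
    ∀ z : ℝ,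
      (∃ u₃, (∃ u₁ u₂, (u₁, u₂, u₃) ∈ D₃) ∧
        ∀ u₂, (∃ u₁, (u₁, u₂, u₃) ∈ D₃) →
          ∃ u₁, (u₁, u₂, u₃) ∈ D₃ ∧ g (u₁, u₂, u₃) ≤ z) ↔ z ≥ c₃ := by
  obtain rfl : h = maxMinOver D₃ g := funext hh
  intro z
  constructor
  · rintro ⟨u₃, hproj, hle⟩
    calc c₃ ≤ maxMinOver D₃ g u₃ := by
          rw [hc₃]
          exact csInf_le (bddBelow_maxMinOver_image hcomp hg) ⟨u₃, hproj, rfl⟩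
      _ ≤ z := maxMinOver_le hcomp hg hproj hle
  · intro hz
    obtain ⟨u₃, hproj, hval⟩ := hattained
    refine ⟨u₃, hproj, fun u₂ hu₂ ↦ ?_⟩
    obtain ⟨u₁, hu₁, hmin⟩ := (isLeast_minOver hcomp hg hu₂).1
    refine ⟨u₁, hu₁, ?_⟩
    calc g (u₁, u₂, u₃) = minOver D₃ g (u₂, u₃) := hmin
      _ ≤ maxMinOver D₃ g u₃ := minOver_le_maxMinOver hcomp hg hu₁
      _ = c₃ := hval
      _ ≤ z := hz

theorem stmt_2 (n₁ n₂ n₃ : ℕ)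
    (D₃ : Set ((Fin n₁ → ℝ) × (Fin n₂ → ℝ) × (Fin n₃ → ℝ)))
    (hne : D₃.Nonempty) (hcomp : IsCompact D₃)
    (g : ((Fin n₁ → ℝ) × (Fin n₂ → ℝ) × (Fin n₃ → ℝ)) → ℝ) (hg : Continuous g)
    (h : (Fin n₃ → ℝ) → ℝ)
    (hh : ∀ u₃, h u₃ = sSup {r : ℝ | ∃ u₂, (∃ u₁, (u₁, u₂, u₃) ∈ D₃) ∧
      sInf {s : ℝ | ∃ u₁, (u₁, u₂, u₃) ∈ D₃ ∧ g (u₁, u₂, u₃) = s} = r})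
    (c₃ : ℝ)
    (hc₃ : c₃ = sInf {r : ℝ | ∃ u₃, (∃ u₁ u₂, (u₁, u₂, u₃) ∈ D₃) ∧ h u₃ = r})
    (hattained : ∃ u₃, (∃ u₁ u₂, (u₁, u₂, u₃) ∈ D₃) ∧ h u₃ = c₃) :
    ∀ z : ℝ,
      (∃ u₃, (∃ u₁ u₂, (u₁, u₂, u₃) ∈ D₃) ∧
        ∀ u₂, (∃ u₁, (u₁, u₂, u₃) ∈ D₃) →
          ∃ u₁, (u₁, u₂, u₃) ∈ D₃ ∧ g (u₁, u₂, u₃) ≤ z) ↔ z ≥ c₃ :=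
  stmt_2_general n₁ n₂ n₃ D₃ hcomp g hg h hh c₃ hc₃ hattained
end

section
/- Let D₃ ⊆ ℝ^{n₁} × ℝ^{n₂} × ℝ^{n₃} be a nonempty compact set and g : ℝ^{n₁} × ℝ^{n₂} × ℝ^{n₃} → ℝ be continuous. For u₃ in the projection π₃(D₃) = {u₃ | ∃ u₁ u₂, (u₁,u₂,u₃) ∈ D₃}, let h(u₃) := sSup { sInf { g(u₁,u₂,u₃) | (u₁,u₂,u₃) ∈ D₃ } | u₂ with ∃ u₁, (u₁,u₂,u₃) ∈ D₃ }, and let c₃ := sInf { h(u₃) | u₃ ∈ π₃(D₃) }. Assume the infimum c₃ is NOT attained, i.e., h(u₃) > c₃ for every u₃ ∈ π₃(D₃). Then for every real z: [∃ u₃, (∃ u₁ u₂, (u₁,u₂,u₃) ∈ D₃) ∧ ∀ u₂, ((∃ u₁, (u₁,u₂,u₃) ∈ D₃) → ∃ u₁, ((u₁,u₂,u₃) ∈ D₃ ∧ g(u₁,u₂,u₃) ≤ z))] if and only if z > c₃. -/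
/-!
If some `u₃` admits, for every `u₂`, a `u₁` with `g ≤ z`, then `h u₃ ≤ z`, and non-attainment
upgrades `c₃ ≤ h u₃` to `c₃ < z`. Conversely, `c₃ < z` yields `u₃` with `h u₃ < z`; every inner
infimum at `u₃` lies below `h u₃`, hence below `z`, and so is undercut by a value of `g`.
Compactness and continuity enter only through the boundedness of `g` on `D₃`, which keeps
these conditionally complete infima and suprema honest.
-/

noncomputable section

namespace MinMaxFiber

variable {α β γ : Type*} (D : Set (α × β × γ)) (g : α × β × γ → ℝ)

def infFiber (u₂ : β) (u₃ : γ) : ℝ :=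
  sInf {s : ℝ | ∃ u₁, (u₁, u₂, u₃) ∈ D ∧ g (u₁, u₂, u₃) = s}

def supInfFiber (u₃ : γ) : ℝ :=
  sSup {r : ℝ | ∃ u₂, (∃ u₁, (u₁, u₂, u₃) ∈ D) ∧ infFiber D g u₂ u₃ = r}

variable {D g} {u₁ : α} {u₂ : β} {u₃ : γ} {z : ℝ}

theorem infFiber_le (hb : BddBelow (g '' D)) (hx : (u₁, u₂, u₃) ∈ D) :
    infFiber D g u₂ u₃ ≤ g (u₁, u₂, u₃) :=
  csInf_le (hb.mono <| by rintro _ ⟨u₁, hx, rfl⟩; exact ⟨_, hx, rfl⟩) ⟨u₁, hx, rfl⟩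

theorem infFiber_le_supInfFiber (hb : BddBelow (g '' D)) (ha : BddAbove (g '' D))
    (hu₂ : ∃ u₁, (u₁, u₂, u₃) ∈ D) : infFiber D g u₂ u₃ ≤ supInfFiber D g u₃ := by
  obtain ⟨M, hM⟩ := ha
  refine le_csSup ⟨M, ?_⟩ ⟨u₂, hu₂, rfl⟩
  rintro _ ⟨u₂, ⟨u₁, hx⟩, rfl⟩
  exact (infFiber_le hb hx).trans (hM ⟨_, hx, rfl⟩)

theorem supInfFiber_le (hb : BddBelow (g '' D)) (hu₃ : ∃ u₁ u₂, (u₁, u₂, u₃) ∈ D)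
    (hz : ∀ u₂, (∃ u₁, (u₁, u₂, u₃) ∈ D) → ∃ u₁, (u₁, u₂, u₃) ∈ D ∧ g (u₁, u₂, u₃) ≤ z) :
    supInfFiber D g u₃ ≤ z := by
  obtain ⟨u₁, u₂, hx⟩ := hu₃
  refine csSup_le ⟨_, u₂, ⟨u₁, hx⟩, rfl⟩ ?_
  rintro _ ⟨u₂, hu₂, rfl⟩
  obtain ⟨u₁, hx, hgz⟩ := hz u₂ hu₂
  exact (infFiber_le hb hx).trans hgz

theorem exists_le_of_supInfFiber_lt (hb : BddBelow (g '' D)) (ha : BddAbove (g '' D))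
    (hlt : supInfFiber D g u₃ < z) (hu₂ : ∃ u₁, (u₁, u₂, u₃) ∈ D) :
    ∃ u₁, (u₁, u₂, u₃) ∈ D ∧ g (u₁, u₂, u₃) ≤ z := by
  have hinf : infFiber D g u₂ u₃ < z := (infFiber_le_supInfFiber hb ha hu₂).trans_lt hlt
  obtain ⟨u₁, hx⟩ := hu₂
  obtain ⟨_, ⟨u₁, hx, rfl⟩, hgz⟩ := exists_lt_of_csInf_lt (by exact ⟨_, u₁, hx, rfl⟩) hinf
  exact ⟨u₁, hx, hgz.le⟩

end MinMaxFiber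

end

open MinMaxFiber in
theorem stmt_3 (n₁ n₂ n₃ : ℕ)
    (D₃ : Set ((Fin n₁ → ℝ) × (Fin n₂ → ℝ) × (Fin n₃ → ℝ)))
    (hne : D₃.Nonempty) (hcomp : IsCompact D₃)
    (g : ((Fin n₁ → ℝ) × (Fin n₂ → ℝ) × (Fin n₃ → ℝ)) → ℝ) (hg : Continuous g)
    (h : (Fin n₃ → ℝ) → ℝ)
    (hh : ∀ u₃, h u₃ = sSup {r : ℝ | ∃ u₂, (∃ u₁, (u₁, u₂, u₃) ∈ D₃) ∧
      sInf {s : ℝ | ∃ u₁, (u₁, u₂, u₃) ∈ D₃ ∧ g (u₁, u₂, u₃) = s} = r})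
    (c₃ : ℝ)
    (hc₃ : c₃ = sInf {r : ℝ | ∃ u₃, (∃ u₁ u₂, (u₁, u₂, u₃) ∈ D₃) ∧ h u₃ = r})
    (hnotattained : ∀ u₃, (∃ u₁ u₂, (u₁, u₂, u₃) ∈ D₃) → h u₃ > c₃) :
    ∀ z : ℝ,
      (∃ u₃, (∃ u₁ u₂, (u₁, u₂, u₃) ∈ D₃) ∧
        ∀ u₂, (∃ u₁, (u₁, u₂, u₃) ∈ D₃) →
          ∃ u₁, (u₁, u₂, u₃) ∈ D₃ ∧ g (u₁, u₂, u₃) ≤ z) ↔ z > c₃ := by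
  intro z
  have hb : BddBelow (g '' D₃) := (hcomp.image hg).bddBelow
  have ha : BddAbove (g '' D₃) := (hcomp.image hg).bddAbove
  have hh' (u₃) : h u₃ = supInfFiber D₃ g u₃ := hh u₃
  constructor
  · rintro ⟨u₃, hu₃, hz⟩
    exact (hnotattained u₃ hu₃).trans_le (hh' u₃ ▸ supInfFiber_le hb hu₃ hz)
  · intro hz
    rw [gt_iff_lt, hc₃] at hz
    obtain ⟨⟨u₁, u₂, u₃⟩, hx⟩ := hne
    obtain ⟨_, ⟨u₃, hu₃, rfl⟩, hlt⟩ :=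
      exists_lt_of_csInf_lt (by exact ⟨_, u₃, ⟨u₁, u₂, hx⟩, rfl⟩) hz
    exact ⟨u₃, hu₃, fun u₂ ↦ exists_le_of_supInfFiber_lt hb ha (hh' u₃ ▸ hlt)⟩
end

section
/- Let δ = 0.015 and ε = 0.06. Let t ∈ [0,20], let t₁ ≤ t₂ ≤ t₃ ≤ t₄ and s₁ ≤ s₂ ≤ s₃ ≤ s₄ be two nondecreasing quadruples of reals with |tᵢ − sᵢ| ≤ δ for i = 1,2,3,4, and let v₀, w₀ be reals with |v₀ − w₀| ≤ ε. Then |(v₀ + V_in(t; t₁,t₂,t₃,t₄)) − (w₀ + V_in(t; s₁,s₂,s₃,s₄))| ≤ 8.8·δ + ε, and 8.8·δ + ε < 0.2. -/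
/-- Volume of oil pumped in by time `t` with two activations during `[t₁,t₂] ∪ [t₃,t₄]`
at rate 2.2 l/s. -/
noncomputable def Vin (t t₁ t₂ t₃ t₄ : ℝ) : ℝ :=
  2.2 * ((min t t₂ - min t t₁) + (min t t₄ - min t t₃))

/-! Each switching time enters `Vin` only through the 1-Lipschitz map `s ↦ min t s`, with
coefficient `± 2.2`, so an error `δ` in each of the four times moves `Vin` by at most
`4 · 2.2 · δ = 8.8 δ`; the initial volume adds its own error `ε`. -/

theorem abs_min_sub_min_le_abs {α : Type*} [AddCommGroup α] [LinearOrder α]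
    [IsOrderedAddMonoid α] (a b c : α) : |min c a - min c b| ≤ |a - b| := by
  simpa only [sub_self, abs_zero, max_eq_right (abs_nonneg (a - b))]
    using abs_min_sub_min_le_max c a c b

theorem abs_Vin_sub_Vin_le (t t₁ t₂ t₃ t₄ s₁ s₂ s₃ s₄ : ℝ) :
    |Vin t t₁ t₂ t₃ t₄ - Vin t s₁ s₂ s₃ s₄| ≤
      2.2 * (|t₁ - s₁| + |t₂ - s₂| + |t₃ - s₃| + |t₄ - s₄|) := by
  have h₁ := abs_min_sub_min_le_abs t₁ s₁ t
  have h₂ := abs_min_sub_min_le_abs t₂ s₂ t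
  have h₃ := abs_min_sub_min_le_abs t₃ s₃ t
  have h₄ := abs_min_sub_min_le_abs t₄ s₄ t
  rw [Vin, Vin, ← mul_sub, abs_mul, abs_of_pos (by norm_num : (0 : ℝ) < 2.2)]
  gcongr
  rw [abs_le] at h₁ h₂ h₃ h₄ ⊢
  constructor <;> linarith

theorem stmt_6_general (t t₁ t₂ t₃ t₄ s₁ s₂ s₃ s₄ v₀ w₀ : ℝ)
    (h1 : |t₁ - s₁| ≤ 0.015) (h2 : |t₂ - s₂| ≤ 0.015)
    (h3 : |t₃ - s₃| ≤ 0.015) (h4 : |t₄ - s₄| ≤ 0.015)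
    (hv : |v₀ - w₀| ≤ 0.06) :
    |(v₀ + Vin t t₁ t₂ t₃ t₄) - (w₀ + Vin t s₁ s₂ s₃ s₄)| ≤ 8.8 * 0.015 + 0.06 ∧
    (8.8 : ℝ) * 0.015 + 0.06 < 0.2 := by
  refine ⟨?_, by norm_num⟩
  calc |(v₀ + Vin t t₁ t₂ t₃ t₄) - (w₀ + Vin t s₁ s₂ s₃ s₄)|
      = |(v₀ - w₀) + (Vin t t₁ t₂ t₃ t₄ - Vin t s₁ s₂ s₃ s₄)| := by congr 1; ring
    _ ≤ |v₀ - w₀| + |Vin t t₁ t₂ t₃ t₄ - Vin t s₁ s₂ s₃ s₄| := abs_add_le _ _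
    _ ≤ 0.06 + 2.2 * (0.015 + 0.015 + 0.015 + 0.015) := by
      gcongr
      exact (abs_Vin_sub_Vin_le t t₁ t₂ t₃ t₄ s₁ s₂ s₃ s₄).trans (by gcongr)
    _ = 8.8 * 0.015 + 0.06 := by norm_num

theorem stmt_6 (t t₁ t₂ t₃ t₄ s₁ s₂ s₃ s₄ v₀ w₀ : ℝ)
    (ht : 0 ≤ t ∧ t ≤ 20)
    (ht12 : t₁ ≤ t₂) (ht23 : t₂ ≤ t₃) (ht34 : t₃ ≤ t₄)
    (hs12 : s₁ ≤ s₂) (hs23 : s₂ ≤ s₃) (hs34 : s₃ ≤ s₄)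
    (h1 : |t₁ - s₁| ≤ 0.015) (h2 : |t₂ - s₂| ≤ 0.015)
    (h3 : |t₃ - s₃| ≤ 0.015) (h4 : |t₄ - s₄| ≤ 0.015)
    (hv : |v₀ - w₀| ≤ 0.06) :
    |(v₀ + Vin t t₁ t₂ t₃ t₄) - (w₀ + Vin t s₁ s₂ s₃ s₄)| ≤ 8.8 * 0.015 + 0.06 ∧
    (8.8 : ℝ) * 0.015 + 0.06 < 0.2 :=
  stmt_6_general t t₁ t₂ t₃ t₄ s₁ s₂ s₃ s₄ v₀ w₀ h1 h2 h3 h4 hv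
end

section
/- Let 0 ≤ t₁ ≤ t₂ ≤ t₃ ≤ t₄ ≤ 20 and v₀ ∈ ℝ. Define v(t) = v₀ + V_in(t; t₁,t₂,t₃,t₄) − V_out(t) for t ∈ [0,20], where V_out is the nominal consumption function. Then (1/20)·∫₀²⁰ v(t) dt = (20·v₀ + 1.1·(t₁² − t₂² + t₃² − t₄² − 40·t₁ + 40·t₂ − 40·t₃ + 40·t₄) − 132.2)/20. -/
/-- The nominal consumption function (continuous piecewise linear, `Vout 0 = 0`). -/
noncomputable def Vout (t : ℝ) : ℝ :=
  if t ≤ 2 then 0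
  else if t ≤ 4 then 1.2 * (t - 2)
  else if t ≤ 8 then 2.4
  else if t ≤ 10 then 2.4 + 1.2 * (t - 8)
  else if t ≤ 12 then 4.8 + 2.5 * (t - 10)
  else if t ≤ 14 then 9.8
  else if t ≤ 16 then 9.8 + 1.7 * (t - 14)
  else if t ≤ 18 then 13.2 + 0.5 * (t - 16)
  else 14.2

/-!
Both volume functions are linear combinations of ramps `min t b - min t a`: the pump
contributes rate 2.2 on `[t₁, t₂]` and `[t₃, t₄]`, and the nominal consumption has rates
1.2, 1.2, 2.5, 1.7, 0.5 on `[2, 4]`, `[8, 10]`, `[10, 12]`, `[14, 16]`, `[16, 18]`.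
Splitting `min t c` at its kink `c` gives `∫ t in a..b, ramp s e t = b (e - s) - (e² - s²) / 2`,
and the claim follows by linearity of the integral.
-/

open intervalIntegral

/-- Volume delivered by time `t` by a unit-rate flow that runs during `[a, b]`. -/
noncomputable def ramp (a b t : ℝ) : ℝ := min t b - min t a

@[fun_prop]
lemma continuous_ramp (a b : ℝ) : Continuous (ramp a b) := by
  unfold ramp; fun_prop

lemma integral_min_const {a b c : ℝ} (hac : a ≤ c) (hcb : c ≤ b) :
    ∫ t in a..b, min t c = (c ^ 2 - a ^ 2) / 2 + c * (b - c) := by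
  have hcont : Continuous fun t : ℝ => min t c := continuous_id.min continuous_const
  rw [← integral_add_adjacent_intervals (hcont.intervalIntegrable a c)
    (hcont.intervalIntegrable c b)]
  have below : ∫ t in a..c, min t c = ∫ t in a..c, t :=
    integral_congr fun t ht => min_eq_left (by rw [Set.uIcc_of_le hac] at ht; exact ht.2)
  have above : ∫ t in c..b, min t c = ∫ _ in c..b, c :=
    integral_congr fun t ht => min_eq_right (by rw [Set.uIcc_of_le hcb] at ht; exact ht.1)
  rw [below, above, integral_id, integral_const, smul_eq_mul]
  ring

lemma integral_ramp {a b s e : ℝ} (has : a ≤ s) (hsb : s ≤ b) (hae : a ≤ e) (heb : e ≤ b) :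
    ∫ t in a..b, ramp s e t = b * (e - s) - (e ^ 2 - s ^ 2) / 2 := by
  have hmin : ∀ c, IntervalIntegrable (fun t : ℝ => min t c) MeasureTheory.volume a b :=
    fun c => (continuous_id.min continuous_const).intervalIntegrable a b
  unfold ramp
  rw [integral_sub (hmin e) (hmin s), integral_min_const hae heb, integral_min_const has hsb]
  ring

lemma Vin_eq_ramp (t t₁ t₂ t₃ t₄ : ℝ) :
    Vin t t₁ t₂ t₃ t₄ = 2.2 * (ramp t₁ t₂ t + ramp t₃ t₄ t) := rfl

lemma Vout_eq_ramp (t : ℝ) :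
    Vout t = 1.2 * ramp 2 4 t + 1.2 * ramp 8 10 t + 2.5 * ramp 10 12 t
      + 1.7 * ramp 14 16 t + 0.5 * ramp 16 18 t := by
  simp only [Vout, ramp]
  split_ifs <;> grind

@[fun_prop]
lemma continuous_Vin (t₁ t₂ t₃ t₄ : ℝ) : Continuous fun t => Vin t t₁ t₂ t₃ t₄ := by
  simp_rw [Vin_eq_ramp]; fun_prop

@[fun_prop]
lemma continuous_Vout : Continuous Vout := by
  rw [funext Vout_eq_ramp]; fun_prop

lemma integral_Vout : ∫ t in (0:ℝ)..20, Vout t = 132.2 := by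
  simp_rw [Vout_eq_ramp]
  rw [integral_add, integral_add, integral_add, integral_add]
  · simp only [integral_const_mul]
    rw [integral_ramp, integral_ramp, integral_ramp, integral_ramp, integral_ramp]
    all_goals norm_num
  all_goals apply Continuous.intervalIntegrable; fun_prop

lemma integral_Vin {t₁ t₂ t₃ t₄ : ℝ} (h0 : 0 ≤ t₁) (h12 : t₁ ≤ t₂) (h23 : t₂ ≤ t₃)
    (h34 : t₃ ≤ t₄) (h4 : t₄ ≤ 20) :
    ∫ t in (0:ℝ)..20, Vin t t₁ t₂ t₃ t₄ = 2.2 * ((20 * (t₂ - t₁) - (t₂ ^ 2 - t₁ ^ 2) / 2)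
      + (20 * (t₄ - t₃) - (t₄ ^ 2 - t₃ ^ 2) / 2)) := by
  simp_rw [Vin_eq_ramp]
  rw [integral_const_mul, integral_add, integral_ramp, integral_ramp]
  all_goals first | linarith | apply Continuous.intervalIntegrable; fun_prop

theorem stmt_12 (v₀ t₁ t₂ t₃ t₄ : ℝ)
    (h0 : 0 ≤ t₁) (h12 : t₁ ≤ t₂) (h23 : t₂ ≤ t₃) (h34 : t₃ ≤ t₄) (h4 : t₄ ≤ 20) :
    (1 / 20) * ∫ t in (0:ℝ)..20, (v₀ + Vin t t₁ t₂ t₃ t₄ - Vout t) =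
      (20 * v₀ + 1.1 * (t₁ ^ 2 - t₂ ^ 2 + t₃ ^ 2 - t₄ ^ 2
        - 40 * t₁ + 40 * t₂ - 40 * t₃ + 40 * t₄) - 132.2) / 20 := by
  rw [integral_sub, integral_add, integral_const, integral_Vin h0 h12 h23 h34 h4, integral_Vout,
    smul_eq_mul]
  · ring
  all_goals apply Continuous.intervalIntegrable; fun_prop
end

section
/- Let v₀ ∈ [5.1, 7.5] and set t₁ = (10v₀ − 25)/13, t₂ = (10v₀ + 1)/13, t₃ = (10v₀ + 153)/22, t₄ = 157/11. Then v(20) := v₀ + V_in(20; t₁,t₂,t₃,t₄) − 14.2 = 6.3 (independent of v₀), and furthermore (1300·(6.3)² + 20420·(6.3) + 634817)/114400 = 40753/5720. -/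
theorem Vin_of_le {t t₁ t₂ t₃ t₄ : ℝ} (h₁ : t₁ ≤ t) (h₂ : t₂ ≤ t) (h₃ : t₃ ≤ t) (h₄ : t₄ ≤ t) :
    Vin t t₁ t₂ t₃ t₄ = 2.2 * ((t₂ - t₁) + (t₄ - t₃)) := by
  rw [Vin, min_eq_right h₁, min_eq_right h₂, min_eq_right h₃, min_eq_right h₄]

theorem stmt_13 (v₀ : ℝ) (hv₀ : 5.1 ≤ v₀ ∧ v₀ ≤ 7.5) :
    v₀ + Vin 20 ((10 * v₀ - 25) / 13) ((10 * v₀ + 1) / 13) ((10 * v₀ + 153) / 22)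
        (157 / 11) - 14.2 = 6.3 ∧
    (1300 * (6.3 : ℝ) ^ 2 + 20420 * 6.3 + 634817) / 114400 = 40753 / 5720 := by
  obtain ⟨-, hv₀_le⟩ := hv₀
  have hVin := Vin_of_le (t := 20) (t₁ := (10 * v₀ - 25) / 13) (t₂ := (10 * v₀ + 1) / 13)
    (t₃ := (10 * v₀ + 153) / 22) (t₄ := 157 / 11)
    (by linarith) (by linarith) (by linarith) (by norm_num)
  exact ⟨by rw [hVin]; ring, by norm_num⟩
end

section
/- For every v₀ ∈ [5.1, 7.5], (1300·v₀² + 20420·v₀ + 634817)/114400 ≤ 215273/28600, with equality exactly at v₀ = 7.5. Consequently the maximum of V_aav over [5.1, 7.5] equals 215273/28600. -/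
/-! The gap between the claimed maximum and `V_aav v₀` factors as
`(7.5 - v₀) (1300 v₀ + 30170) / 114400`; on `[5.1, 7.5]` the second factor is positive, so the
gap is nonnegative and vanishes exactly at `v₀ = 7.5`. -/

namespace AverageAccumulatedVolume

noncomputable def aav (v₀ : ℝ) : ℝ := (1300 * v₀ ^ 2 + 20420 * v₀ + 634817) / 114400

noncomputable def maxAav : ℝ := 215273 / 28600

theorem maxAav_sub_aav (v₀ : ℝ) : maxAav - aav v₀ = (7.5 - v₀) * (1300 * v₀ + 30170) / 114400 := by
  unfold maxAav aav
  ring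

theorem aav_le_maxAav {v₀ : ℝ} (hlo : -30170 / 1300 ≤ v₀) (hhi : v₀ ≤ 7.5) : aav v₀ ≤ maxAav := by
  have hgap : 0 ≤ maxAav - aav v₀ := by
    rw [maxAav_sub_aav]
    have : 0 ≤ 1300 * v₀ + 30170 := by linarith
    positivity
  linarith

theorem aav_eq_maxAav_iff {v₀ : ℝ} (hlo : -30170 / 1300 < v₀) : aav v₀ = maxAav ↔ v₀ = 7.5 := by
  have hpos : (1300 * v₀ + 30170) / 114400 ≠ 0 := by
    apply div_ne_zero _ (by norm_num)
    linarith
  rw [eq_comm, ← sub_eq_zero, maxAav_sub_aav, mul_div_assoc, mul_eq_zero, sub_eq_zero,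
    or_iff_left hpos, eq_comm]

end AverageAccumulatedVolume

open AverageAccumulatedVolume in
theorem stmt_15 :
    (∀ v₀ : ℝ, 5.1 ≤ v₀ → v₀ ≤ 7.5 →
      ((1300 * v₀ ^ 2 + 20420 * v₀ + 634817) / 114400 ≤ 215273 / 28600 ∧
        ((1300 * v₀ ^ 2 + 20420 * v₀ + 634817) / 114400 = 215273 / 28600 ↔ v₀ = 7.5))) ∧
    IsGreatest ((fun v₀ : ℝ => (1300 * v₀ ^ 2 + 20420 * v₀ + 634817) / 114400) ''
      Set.Icc 5.1 7.5) (215273 / 28600) := by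
  have hlo : ∀ v₀ : ℝ, 5.1 ≤ v₀ → -30170 / 1300 < v₀ := fun v₀ h => by linarith
  have bound : ∀ v₀ : ℝ, 5.1 ≤ v₀ → v₀ ≤ 7.5 → aav v₀ ≤ maxAav ∧ (aav v₀ = maxAav ↔ v₀ = 7.5) :=
    fun v₀ h₁ h₂ => ⟨aav_le_maxAav (hlo v₀ h₁).le h₂, aav_eq_maxAav_iff (hlo v₀ h₁)⟩
  refine ⟨bound, ⟨7.5, ⟨by norm_num, le_rfl⟩, by norm_num⟩, ?_⟩
  rintro _ ⟨v₀, ⟨h₁, h₂⟩, rfl⟩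
  exact (bound v₀ h₁ h₂).1
end

section
/- Let δ = 0.015 and ε = 0.06. Let t ∈ [0,20], let t₁ ≤ t₂ ≤ t₃ ≤ t₄ ≤ t₅ ≤ t₆ and s₁ ≤ s₂ ≤ s₃ ≤ s₄ ≤ s₅ ≤ s₆ be two nondecreasing sextuples of reals with |tᵢ − sᵢ| ≤ δ for i = 1,…,6, and let v₀, w₀ be reals with |v₀ − w₀| ≤ ε. Then |(v₀ + V_in⁶(t; t₁,…,t₆)) − (w₀ + V_in⁶(t; s₁,…,s₆))| ≤ 13.2·δ + ε, and 13.2·δ + ε < 0.3. -/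
/-!
`Vin6 t` is `2.2` times a signed sum of six terms `min t tᵢ`, each of which is 1-Lipschitz in
`tᵢ`. Hence perturbing every switching time by at most `δ` moves the pumped volume by at most
`2.2 · 6 · δ = 13.2 · δ`, and the initial volumes add their own error `ε`.
-/

/-- Volume of oil pumped in by time `t` with three activations during
`[t₁,t₂] ∪ [t₃,t₄] ∪ [t₅,t₆]` at rate 2.2 l/s. -/
noncomputable def Vin6 (t t₁ t₂ t₃ t₄ t₅ t₆ : ℝ) : ℝ :=
  2.2 * ((min t t₂ - min t t₁) + (min t t₄ - min t t₃) + (min t t₆ - min t t₅))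

theorem abs_min_sub_min_left_le {α : Type*} [AddCommGroup α] [LinearOrder α] [IsOrderedAddMonoid α]
    (t a b : α) : |min t a - min t b| ≤ |a - b| := by
  simpa using abs_min_sub_min_le_max t a t b

theorem abs_Vin6_sub_Vin6_le (t t₁ t₂ t₃ t₄ t₅ t₆ s₁ s₂ s₃ s₄ s₅ s₆ : ℝ) :
    |Vin6 t t₁ t₂ t₃ t₄ t₅ t₆ - Vin6 t s₁ s₂ s₃ s₄ s₅ s₆| ≤
      2.2 * (|t₁ - s₁| + |t₂ - s₂| + |t₃ - s₃| + |t₄ - s₄| + |t₅ - s₅| + |t₆ - s₆|) := by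
  have m1 := abs_le.mp (abs_min_sub_min_left_le t t₁ s₁)
  have m2 := abs_le.mp (abs_min_sub_min_left_le t t₂ s₂)
  have m3 := abs_le.mp (abs_min_sub_min_left_le t t₃ s₃)
  have m4 := abs_le.mp (abs_min_sub_min_left_le t t₄ s₄)
  have m5 := abs_le.mp (abs_min_sub_min_left_le t t₅ s₅)
  have m6 := abs_le.mp (abs_min_sub_min_left_le t t₆ s₆)
  rw [Vin6, Vin6, abs_le]
  constructor <;> linarith

theorem stmt_17_general (t t₁ t₂ t₃ t₄ t₅ t₆ s₁ s₂ s₃ s₄ s₅ s₆ v₀ w₀ : ℝ)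
    (h1 : |t₁ - s₁| ≤ 0.015) (h2 : |t₂ - s₂| ≤ 0.015) (h3 : |t₃ - s₃| ≤ 0.015)
    (h4 : |t₄ - s₄| ≤ 0.015) (h5 : |t₅ - s₅| ≤ 0.015) (h6 : |t₆ - s₆| ≤ 0.015)
    (hv : |v₀ - w₀| ≤ 0.06) :
    |(v₀ + Vin6 t t₁ t₂ t₃ t₄ t₅ t₆) - (w₀ + Vin6 t s₁ s₂ s₃ s₄ s₅ s₆)| ≤
      13.2 * 0.015 + 0.06 ∧
    (13.2 : ℝ) * 0.015 + 0.06 < 0.3 := by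
  refine ⟨?_, by norm_num⟩
  have hV := abs_Vin6_sub_Vin6_le t t₁ t₂ t₃ t₄ t₅ t₆ s₁ s₂ s₃ s₄ s₅ s₆
  calc |(v₀ + Vin6 t t₁ t₂ t₃ t₄ t₅ t₆) - (w₀ + Vin6 t s₁ s₂ s₃ s₄ s₅ s₆)|
      = |(v₀ - w₀) + (Vin6 t t₁ t₂ t₃ t₄ t₅ t₆ - Vin6 t s₁ s₂ s₃ s₄ s₅ s₆)| := by ring_nf
    _ ≤ |v₀ - w₀| + |Vin6 t t₁ t₂ t₃ t₄ t₅ t₆ - Vin6 t s₁ s₂ s₃ s₄ s₅ s₆| := abs_add_le _ _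
    _ ≤ 13.2 * 0.015 + 0.06 := by linarith

theorem stmt_17 (t t₁ t₂ t₃ t₄ t₅ t₆ s₁ s₂ s₃ s₄ s₅ s₆ v₀ w₀ : ℝ)
    (ht : 0 ≤ t ∧ t ≤ 20)
    (ht12 : t₁ ≤ t₂) (ht23 : t₂ ≤ t₃) (ht34 : t₃ ≤ t₄) (ht45 : t₄ ≤ t₅) (ht56 : t₅ ≤ t₆)
    (hs12 : s₁ ≤ s₂) (hs23 : s₂ ≤ s₃) (hs34 : s₃ ≤ s₄) (hs45 : s₄ ≤ s₅) (hs56 : s₅ ≤ s₆)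
    (h1 : |t₁ - s₁| ≤ 0.015) (h2 : |t₂ - s₂| ≤ 0.015) (h3 : |t₃ - s₃| ≤ 0.015)
    (h4 : |t₄ - s₄| ≤ 0.015) (h5 : |t₅ - s₅| ≤ 0.015) (h6 : |t₆ - s₆| ≤ 0.015)
    (hv : |v₀ - w₀| ≤ 0.06) :
    |(v₀ + Vin6 t t₁ t₂ t₃ t₄ t₅ t₆) - (w₀ + Vin6 t s₁ s₂ s₃ s₄ s₅ s₆)| ≤
      13.2 * 0.015 + 0.06 ∧
    (13.2 : ℝ) * 0.015 + 0.06 < 0.3 :=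
  stmt_17_general t t₁ t₂ t₃ t₄ t₅ t₆ s₁ s₂ s₃ s₄ s₅ s₆ v₀ w₀ h1 h2 h3 h4 h5 h6 hv
end
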